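/- arXiv:2401.01611 — 2 statements merged into one kernel-verified Lean document; each statement's English description precedes it below -/
import Mathlib

section
/- Let {q_n} be symmetric positive semidefinite matrices in ℝ^{A×A} converging to q, let {m_n} be positive integers and {v_n} positive reals with v_n → ∞ and m_n/v_n → γ for some γ ∈ [1,∞). For each n let G_n ∈ ℝ^{A×A} be the random matrix G_{n;αβ} := C_b + (C_W/m_n) Σ_{j=1}^{m_n} σ(⟨q_n^{#}_{α·}, N_{j·}⟩) σ(⟨q_n^{#}_{β·}, N_{j·}⟩), built from independent standard Normals {N_{jγ}}. Then for every η ∈ ℝ^{A×A}, lim_{n→∞} (1/v_n) log E[exp(v_n Σ_{α,β} η_{αβ} G_{n;αβ})] = C_b Σ_{α,β} η_{αβ} + γ κ((C_W/γ)η ; q). -/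
/-!
The expectation factorizes over the `m_n` independent rows `N_{j·}`: writing
`I(η, s) := E exp(∑_{α,β} η_{αβ} σ((sN)_α) σ((sN)_β))` for a standard Gaussian vector `N`,
`E exp(v_n ⟨η, G_n⟩) = exp(v_n C_b ∑ η) · I((v_n C_W / m_n) η, q_n^#)^{m_n}`, so that exactly
`(1/v_n) log E exp(v_n ⟨η, G_n⟩) = C_b ∑ η + (m_n / v_n) log I((v_n C_W / m_n) η, q_n^#)`.
As `σ` is bounded and continuous, `I` is positive and jointly continuous by dominated
convergence; `q ↦ q^#` is continuous on positive semidefinite matrices, because the entries of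
`q^#` are bounded by the diagonal of `q` and every cluster point of `q_n^#` is a positive
semidefinite square root of `q`. With `m_n / v_n → γ` and `v_n C_W / m_n → C_W / γ`, the right-hand
side tends to `C_b ∑ η + γ log I((C_W/γ) η, q^#) = C_b ∑ η + γ κ((C_W/γ) η; q)`.
-/

open MeasureTheory ProbabilityTheory
open scoped Classical

/-- The positive semidefinite square root `q^#` of a positive semidefinite matrix `q`
(extended by `0` outside the positive semidefinite matrices). -/
noncomputable def psdSqrt {A : Type*} [Fintype A] [DecidableEq A]
    (q : Matrix A A ℝ) : Matrix A A ℝ :=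
  if h : q.PosSemidef then
    h.1.eigenvectorUnitary.1 * Matrix.diagonal ((↑) ∘ (√·) ∘ h.1.eigenvalues) *
      (star h.1.eigenvectorUnitary : Matrix A A ℝ) else 0

/-- The joint law of the i.i.d. standard Normal family `(N_γ)_{γ ∈ A}`. -/
noncomputable def stdGaussPi (A : Type*) [Fintype A] : Measure (A → ℝ) :=
  Measure.pi fun _ => gaussianReal 0 1

/-- `κ(η;q) := log E[exp(∑_{α,β∈A} η_{αβ} σ(⟨q^#_{α·},N⟩) σ(⟨q^#_{β·},N⟩))]`, where
`(N_γ)_{γ∈A}` are independent standard Normal random variables and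
`⟨q^#_{γ·},N⟩ = ∑_{γ'} q^#_{γγ'} N_{γ'}`. -/
noncomputable def kappaFn {A : Type*} [Fintype A] [DecidableEq A]
    (σ : ℝ → ℝ) (η : A → A → ℝ) (q : Matrix A A ℝ) : ℝ :=
  Real.log (∫ z : A → ℝ, Real.exp (∑ α, ∑ β, η α β *
      σ (∑ γ, psdSqrt q α γ * z γ) * σ (∑ γ, psdSqrt q β γ * z γ))
    ∂(stdGaussPi A))

open Filter Topology

namespace ProbabilityTheory

variable {Ω : Type*} [MeasurableSpace Ω] {μ : Measure Ω}

lemma iIndepFun.curry {ι κ 𝓧 : Type*} [MeasurableSpace 𝓧] {X : ι → κ → Ω → 𝓧}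
    (mX : ∀ i j, Measurable (X i j)) (h : iIndepFun (fun p : ι × κ => X p.1 p.2) μ) :
    iIndepFun (fun i ω => (X i · ω)) μ := by
  have := h.isProbabilityMeasure
  have : ∀ i j, IsProbabilityMeasure (μ.map (X i j)) :=
    fun i j ↦ Measure.isProbabilityMeasure_map (mX i j).aemeasurable
  have hcurry : MeasurableEquiv.curry ι κ 𝓧 ∘ (fun ω p => X p.1 p.2 ω) =
      fun ω i j => X i j ω := rfl
  rw [iIndepFun_iff_map_fun_eq_infinitePi_map (by fun_prop), ← hcurry,
    ← Measure.map_map (by fun_prop) (by fun_prop),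
    (iIndepFun_iff_map_fun_eq_infinitePi_map (by fun_prop)).1 h,
    Measure.infinitePi_map_curry (fun i j => μ.map (X i j))]
  congrm Measure.infinitePi fun i ↦ ?_
  exact ((h.precomp (Prod.mk_right_injective i)).map_fun_eq_infinitePi_map (mX i)).symm

lemma iIndepFun.integral_prod_range_eq_pow {E : Type*} [MeasurableSpace E] {Y : ℕ → Ω → E}
    (hY : iIndepFun Y μ) (mY : ∀ j, AEMeasurable (Y j) μ) {ν : Measure E}
    (hlaw : ∀ j, μ.map (Y j) = ν) {f : E → ℝ} (hf : AEStronglyMeasurable f ν) (n : ℕ) :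
    ∫ ω, ∏ j ∈ Finset.range n, f (Y j ω) ∂μ = (∫ x, f x ∂ν) ^ n := by
  simp_rw [Finset.prod_range]
  rw [(hY.precomp Fin.val_injective).integral_fun_prod_comp (fun j => mY j)
    (fun j => hlaw j ▸ hf)]
  have hfactor : ∀ j, ∫ ω, f (Y j ω) ∂μ = ∫ x, f x ∂ν := fun j => by
    rw [← integral_map (mY j) (hlaw j ▸ hf), hlaw]
  simp [hfactor]

lemma iIndepFun.map_eq_stdGaussPi {A : Type*} [Fintype A] {X : A → Ω → ℝ} (hX : iIndepFun X μ)
    (mX : ∀ γ, AEMeasurable (X γ) μ) (hlaw : ∀ γ, μ.map (X γ) = gaussianReal 0 1) :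
    μ.map (fun ω γ => X γ ω) = stdGaussPi A := by
  rw [hX.map_fun_eq_pi_map mX, stdGaussPi]
  simp_rw [hlaw]

end ProbabilityTheory

instance (A : Type*) [Fintype A] : IsProbabilityMeasure (stdGaussPi A) := by
  unfold stdGaussPi; infer_instance

section PsdSqrt

open scoped Matrix MatrixOrder

variable {A : Type*} [Fintype A]

lemma Matrix.isClosed_setOf_posSemidef : IsClosed {s : Matrix A A ℝ | s.PosSemidef} := by
  simp only [Matrix.posSemidef_iff_dotProduct_mulVec, Set.ofPred_and, Set.ofPred_forall]
  exact (isClosed_eq (by fun_prop) continuous_id).inter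
    (isClosed_iInter fun x => isClosed_le continuous_const (by fun_prop))

variable [DecidableEq A] {q s : Matrix A A ℝ}

lemma psdSqrt_eq_cfcSqrt (hq : q.PosSemidef) : psdSqrt q = CFC.sqrt q := by
  rw [CFC.sqrt_eq_cfc, cfc_nnreal_eq_real _ q hq.nonneg, hq.1.cfc_eq]
  simp only [psdSqrt, dif_pos hq, Matrix.IsHermitian.cfc, Unitary.conjStarAlgAut_apply]
  congr 2
  ext i j
  simp [Matrix.diagonal_apply, max_eq_left (hq.eigenvalues_nonneg i)]

lemma Matrix.PosSemidef.psdSqrt (hq : q.PosSemidef) : (psdSqrt q).PosSemidef := by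
  rw [psdSqrt_eq_cfcSqrt hq]
  exact Matrix.nonneg_iff_posSemidef.mp (CFC.sqrt_nonneg q)

lemma psdSqrt_mul_self (hq : q.PosSemidef) : psdSqrt q * psdSqrt q = q := by
  rw [psdSqrt_eq_cfcSqrt hq]
  exact CFC.sqrt_mul_sqrt_self q hq.nonneg

lemma psdSqrt_eq_of_mul_self_eq (hq : q.PosSemidef) (hs : s.PosSemidef) (h : s * s = q) :
    psdSqrt q = s := by
  rw [psdSqrt_eq_cfcSqrt hq]
  exact CFC.sqrt_unique h hs.nonneg

lemma sq_psdSqrt_apply_le (hq : q.PosSemidef) (α β : A) : psdSqrt q α β ^ 2 ≤ q α α := by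
  have hsymm : ∀ γ, psdSqrt q γ α = psdSqrt q α γ := fun γ => hq.psdSqrt.1.apply α γ
  calc psdSqrt q α β ^ 2 ≤ ∑ γ, psdSqrt q α γ ^ 2 :=
        Finset.single_le_sum (fun γ _ => sq_nonneg (psdSqrt q α γ)) (Finset.mem_univ β)
    _ = q α α := by
        conv_rhs => rw [← psdSqrt_mul_self hq]
        simp [Matrix.mul_apply, hsymm, sq]

theorem tendsto_psdSqrt {ι : Type*} {l : Filter ι} {q : ι → Matrix A A ℝ} {q₀ : Matrix A A ℝ}
    (hq : ∀ᶠ i in l, (q i).PosSemidef) (hq₀ : q₀.PosSemidef) (h : Tendsto q l (𝓝 q₀)) :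
    Tendsto (fun i => psdSqrt (q i)) l (𝓝 (psdSqrt q₀)) := by
  set c : A → ℝ := fun α => √(q₀ α α + 1)
  have hK : IsCompact
      (Set.univ.pi fun α => Set.univ.pi fun _ => Set.Icc (-c α) (c α) : Set (Matrix A A ℝ)) :=
    isCompact_univ_pi fun _ => isCompact_univ_pi fun _ => isCompact_Icc
  have hdiag : ∀ᶠ i in l, ∀ α, q i α α < q₀ α α + 1 := eventually_all.2 fun α =>
    ((continuous_apply_apply α α).tendsto q₀ |>.comp h).eventually (gt_mem_nhds (lt_add_one _))
  refine hK.tendsto_nhds_of_unique_mapClusterPt ?_ fun (L : Matrix A A ℝ) _ hL => ?_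
  · filter_upwards [hq, hdiag] with i hqi hqi_diag α _ β _
    rw [Set.mem_Icc, ← abs_le, ← Real.sqrt_sq_eq_abs]
    exact Real.sqrt_le_sqrt ((sq_psdSqrt_apply_le hqi α β).trans (hqi_diag α).le)
  have hLpsd : L.PosSemidef := Matrix.isClosed_setOf_posSemidef.mem_of_mapClusterPt hL
    (hq.mono fun _ => Matrix.PosSemidef.psdSqrt)
  have hLL : MapClusterPt (L * L) l q :=
    (hL.continuousAt_comp (f := fun s : Matrix A A ℝ => s * s) (by fun_prop)).congrFun
      (hq.mono fun _ => psdSqrt_mul_self)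
  exact (psdSqrt_eq_of_mul_self_eq hq₀ hLpsd (eq_of_nhds_neBot (hLL.clusterPt.mono h))).symm

end PsdSqrt

section ActivationMgf

variable {A : Type*} [Fintype A] {σ : ℝ → ℝ} {M : ℝ}

def activationForm (σ : ℝ → ℝ) (η : A → A → ℝ) (s : Matrix A A ℝ) (z : A → ℝ) : ℝ :=
  ∑ α, ∑ β, η α β * σ (∑ γ, s α γ * z γ) * σ (∑ γ, s β γ * z γ)

-- `kappaFn σ η q` unfolds to `Real.log (activationMgf σ η (psdSqrt q))`.
noncomputable def activationMgf (σ : ℝ → ℝ) (η : A → A → ℝ) (s : Matrix A A ℝ) : ℝ :=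
  ∫ z, Real.exp (activationForm σ η s z) ∂stdGaussPi A

lemma Continuous.activationForm {X : Type*} [TopologicalSpace X] (hσ : Continuous σ)
    {η : X → A → A → ℝ} {s : X → Matrix A A ℝ} {z : X → A → ℝ} (hη : Continuous η)
    (hs : Continuous s) (hz : Continuous z) :
    Continuous fun x => activationForm σ (η x) (s x) (z x) := by
  simp only [_root_.activationForm]; fun_prop

lemma abs_activationForm_le (hM : ∀ y, |σ y| ≤ M) (η : A → A → ℝ) (s : Matrix A A ℝ)
    (z : A → ℝ) : |activationForm σ η s z| ≤ M ^ 2 * ∑ α, ∑ β, |η α β| := by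
  have hM₀ : 0 ≤ M := (abs_nonneg _).trans (hM 0)
  rw [Finset.mul_sum]
  refine (Finset.abs_sum_le_sum_abs _ _).trans (Finset.sum_le_sum fun α _ => ?_)
  rw [Finset.mul_sum]
  refine (Finset.abs_sum_le_sum_abs _ _).trans (Finset.sum_le_sum fun β _ => ?_)
  rw [abs_mul, abs_mul, mul_assoc, mul_comm (M ^ 2), sq]
  gcongr
  exacts [hM _, hM _]

lemma integrable_exp_activationForm (hσ : Continuous σ) (hM : ∀ y, |σ y| ≤ M)
    (η : A → A → ℝ) (s : Matrix A A ℝ) :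
    Integrable (fun z => Real.exp (activationForm σ η s z)) (stdGaussPi A) := by
  refine Integrable.of_bound (C := Real.exp (M ^ 2 * ∑ α, ∑ β, |η α β|)) ?_ ?_
  · exact (hσ.activationForm continuous_const continuous_const
      continuous_id).rexp.aestronglyMeasurable
  · refine Eventually.of_forall fun z => ?_
    rw [Real.norm_eq_abs, Real.abs_exp]
    exact Real.exp_le_exp.2 ((le_abs_self _).trans (abs_activationForm_le hM η s z))

lemma activationMgf_pos (hσ : Continuous σ) (hM : ∀ y, |σ y| ≤ M) (η : A → A → ℝ)
    (s : Matrix A A ℝ) : 0 < activationMgf σ η s :=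
  integral_exp_pos (integrable_exp_activationForm hσ hM η s)

lemma continuous_activationMgf (hσ : Continuous σ) (hM : ∀ y, |σ y| ≤ M) :
    Continuous fun p : (A → A → ℝ) × Matrix A A ℝ => activationMgf σ p.1 p.2 := by
  have : FirstCountableTopology (Matrix A A ℝ) :=
    inferInstanceAs (FirstCountableTopology (A → A → ℝ))
  refine continuous_iff_continuousAt.2 fun p₀ => ?_
  set b : (A → A → ℝ) → ℝ := fun η => M ^ 2 * ∑ α, ∑ β, |η α β|
  have hb : ∀ᶠ p in 𝓝 p₀, b p.1 < b p₀.1 + 1 :=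
    ((by fun_prop : Continuous fun p : (A → A → ℝ) × Matrix A A ℝ => b p.1).tendsto p₀).eventually
      (gt_mem_nhds (lt_add_one _))
  refine continuousAt_of_dominated (bound := fun _ => Real.exp (b p₀.1 + 1))
    (Eventually.of_forall fun p => (hσ.activationForm continuous_const continuous_const
      continuous_id).rexp.aestronglyMeasurable) ?_ (integrable_const _)
    (Eventually.of_forall fun z => (hσ.activationForm continuous_fst continuous_snd
      continuous_const).rexp.continuousAt)
  filter_upwards [hb] with p hp
  refine Eventually.of_forall fun z => ?_
  rw [Real.norm_eq_abs, Real.abs_exp]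
  exact Real.exp_le_exp.2
    ((le_abs_self _).trans ((abs_activationForm_le hM p.1 p.2 z).trans hp.le))

end ActivationMgf

lemma mul_sum_sum_const_add_gram {A ι : Type*} [Fintype A] (η : A → A → ℝ) (t b c : ℝ)
    (R : Finset ι) (u : ι → A → ℝ) :
    t * ∑ α, ∑ β, η α β * (b + c * ∑ j ∈ R, u j α * u j β) =
      t * b * ∑ α, ∑ β, η α β + ∑ j ∈ R, ∑ α, ∑ β, t * c * η α β * u j α * u j β := by
  simp only [mul_add, Finset.mul_sum, Finset.sum_add_distrib]
  congr 1
  · exact Finset.sum_congr rfl fun α _ => Finset.sum_congr rfl fun β _ => by ring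
  · rw [Finset.sum_congr rfl fun α _ => Finset.sum_comm, Finset.sum_comm]
    exact Finset.sum_congr rfl fun j _ => Finset.sum_congr rfl fun α _ =>
      Finset.sum_congr rfl fun β _ => by ring

lemma integral_exp_mul_gram {Ω : Type*} [MeasurableSpace Ω] {μ : Measure Ω}
    {A : Type*} [Fintype A] {σ : ℝ → ℝ} (hσ : Continuous σ) {N : ℕ → A → Ω → ℝ}
    (hNmeas : ∀ j γ, Measurable (N j γ)) (hN : ∀ j γ, μ.map (N j γ) = gaussianReal 0 1)
    (hNindep : iIndepFun (fun p : ℕ × A => N p.1 p.2) μ)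
    (η : A → A → ℝ) (s : Matrix A A ℝ) (t b c : ℝ) (n : ℕ) :
    ∫ ω, Real.exp (t * ∑ α, ∑ β, η α β * (b + c * ∑ j ∈ Finset.range n,
        σ (∑ γ, s α γ * N j γ ω) * σ (∑ γ, s β γ * N j γ ω))) ∂μ =
      Real.exp (t * b * ∑ α, ∑ β, η α β) * activationMgf σ (fun α β => t * c * η α β) s ^ n := by
  have hrows : iIndepFun (fun j ω γ => N j γ ω) μ := hNindep.curry hNmeas
  have hlaw : ∀ j, μ.map (fun ω γ => N j γ ω) = stdGaussPi A := fun j =>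
    (hNindep.precomp (Prod.mk_right_injective j)).map_eq_stdGaussPi
      (fun γ => (hNmeas j γ).aemeasurable) (hN j)
  have hsplit : ∀ ω, t * ∑ α, ∑ β, η α β * (b + c * ∑ j ∈ Finset.range n,
      σ (∑ γ, s α γ * N j γ ω) * σ (∑ γ, s β γ * N j γ ω)) = t * b * ∑ α, ∑ β, η α β +
        ∑ j ∈ Finset.range n, activationForm σ (fun α β => t * c * η α β) s (fun γ => N j γ ω) :=
    fun ω => mul_sum_sum_const_add_gram η t b c _ _
  simp_rw [hsplit, Real.exp_add, Real.exp_sum]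
  rw [integral_const_mul]
  congr 1
  exact hrows.integral_prod_range_eq_pow
    (fun j => (measurable_pi_lambda _ (hNmeas j)).aemeasurable) hlaw
    (f := fun z => Real.exp (activationForm σ (fun α β => t * c * η α β) s z))
    (hσ.activationForm continuous_const continuous_const continuous_id).rexp.aestronglyMeasurable n

theorem scaled_logMgf_tendsto_general
    {Ω : Type*} [MeasurableSpace Ω] (μ : Measure Ω)
    {A : Type*} [Fintype A] [DecidableEq A]
    (Cb CW : ℝ)
    (σ : ℝ → ℝ) (hσ : Continuous σ) (hσbd : ∃ M, ∀ y, |σ y| ≤ M)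
    (q : ℕ → Matrix A A ℝ) (hq : ∀ k, (q k).PosSemidef)
    (qlim : Matrix A A ℝ) (hqlim : qlim.PosSemidef)
    (hqconv : Filter.Tendsto q Filter.atTop (nhds qlim))
    (m : ℕ → ℕ)
    (v : ℕ → ℝ) (hv : ∀ k, 0 < v k)
    (γ : ℝ) (hγ : 1 ≤ γ)
    (hmv : Filter.Tendsto (fun k => (m k : ℝ) / v k) Filter.atTop (nhds γ))
    (N : ℕ → A → Ω → ℝ)
    (hNmeas : ∀ j g, Measurable (N j g))
    (hN : ∀ j g, Measure.map (N j g) μ = gaussianReal 0 1)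
    (hNindep : iIndepFun
      (fun p : ℕ × A => N p.1 p.2) μ)
    (η : A → A → ℝ) :
    Filter.Tendsto
      (fun k => (1 / v k) * Real.log (∫ ω, Real.exp (v k * ∑ α, ∑ β, η α β *
          (Cb + CW / (m k : ℝ) * ∑ j ∈ Finset.range (m k),
            σ (∑ γ', psdSqrt (q k) α γ' * N j γ' ω) *
            σ (∑ γ', psdSqrt (q k) β γ' * N j γ' ω))) ∂μ))
      Filter.atTop
      (nhds (Cb * (∑ α, ∑ β, η α β)
        + γ * kappaFn σ (fun α β => CW / γ * η α β) qlim)) := by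
  obtain ⟨M, hM⟩ := hσbd
  have hscale : Tendsto (fun k => v k * (CW / m k)) atTop (𝓝 (CW / γ)) := by
    rw [div_eq_mul_inv CW γ]
    exact ((hmv.inv₀ (zero_lt_one.trans_le hγ).ne').const_mul CW).congr fun k => by
      rw [inv_div]; ring
  have hη : Tendsto (fun k α β => v k * (CW / m k) * η α β) atTop
      (𝓝 fun α β => CW / γ * η α β) :=
    tendsto_pi_nhds.2 fun α => tendsto_pi_nhds.2 fun β => hscale.mul_const _
  have hlog : Tendsto
      (fun k => Real.log (activationMgf σ (fun α β => v k * (CW / m k) * η α β) (psdSqrt (q k))))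
      atTop (𝓝 (Real.log (activationMgf σ (fun α β => CW / γ * η α β) (psdSqrt qlim)))) :=
    have hmgf := ((continuous_activationMgf hσ hM).tendsto _).comp
      (hη.prodMk_nhds (tendsto_psdSqrt (.of_forall hq) hqlim hqconv))
    (Real.continuousAt_log (activationMgf_pos hσ hM _ _).ne').tendsto.comp hmgf
  refine (tendsto_const_nhds.add (hmv.mul hlog)).congr fun k => ?_
  rw [integral_exp_mul_gram hσ hNmeas hN hNindep, Real.log_mul (Real.exp_ne_zero _)
    (pow_ne_zero _ (activationMgf_pos hσ hM _ _).ne'), Real.log_exp, Real.log_pow]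
  field_simp [(hv k).ne']

/-- Let `q_n → q` be symmetric positive semidefinite matrices, `m_n`
positive integers and `v_n` positive reals with `v_n → ∞` and `m_n/v_n → γ ∈ [1,∞)`.
For random matrices `G_{n;αβ} = C_b + (C_W/m_n) ∑_{j<m_n} σ(⟨q_n^#_{α·},N_{j·}⟩)
σ(⟨q_n^#_{β·},N_{j·}⟩)` built from independent standard Normals,
`(1/v_n) log E[exp(v_n ∑_{α,β} η_{αβ} G_{n;αβ})] → C_b ∑_{α,β} η_{αβ} + γ κ((C_W/γ)η ; q)`. -/
theorem scaled_logMgf_tendsto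
    {Ω : Type*} [MeasurableSpace Ω] (μ : Measure Ω) [IsProbabilityMeasure μ]
    {A : Type*} [Fintype A] [DecidableEq A]
    (Cb CW : ℝ) (hCb : 0 ≤ Cb) (hCW : 0 < CW)
    (σ : ℝ → ℝ) (hσ : Continuous σ) (hσbd : ∃ M, ∀ y, |σ y| ≤ M)
    (q : ℕ → Matrix A A ℝ) (hq : ∀ k, (q k).PosSemidef)
    (qlim : Matrix A A ℝ) (hqlim : qlim.PosSemidef)
    (hqconv : Filter.Tendsto q Filter.atTop (nhds qlim))
    (m : ℕ → ℕ) (hm : ∀ k, 1 ≤ m k)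
    (v : ℕ → ℝ) (hv : ∀ k, 0 < v k)
    (hvtop : Filter.Tendsto v Filter.atTop Filter.atTop)
    (γ : ℝ) (hγ : 1 ≤ γ)
    (hmv : Filter.Tendsto (fun k => (m k : ℝ) / v k) Filter.atTop (nhds γ))
    (N : ℕ → A → Ω → ℝ)
    (hNmeas : ∀ j g, Measurable (N j g))
    (hN : ∀ j g, Measure.map (N j g) μ = gaussianReal 0 1)
    (hNindep : iIndepFun
      (fun p : ℕ × A => N p.1 p.2) μ)
    (η : A → A → ℝ) :
    Filter.Tendsto
      (fun k => (1 / v k) * Real.log (∫ ω, Real.exp (v k * ∑ α, ∑ β, η α β *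
          (Cb + CW / (m k : ℝ) * ∑ j ∈ Finset.range (m k),
            σ (∑ γ', psdSqrt (q k) α γ' * N j γ' ω) *
            σ (∑ γ', psdSqrt (q k) β γ' * N j γ' ω))) ∂μ))
      Filter.atTop
      (nhds (Cb * (∑ α, ∑ β, η α β)
        + γ * kappaFn σ (fun α β => CW / γ * η α β) qlim)) :=
  scaled_logMgf_tendsto_general μ Cb CW σ hσ hσbd q hq qlim hqlim hqconv m v hv γ hγ hmv N hNmeas hN
    hNindep η
end

section
/- For q > 0 and y > 0, letting z := f^{−1}(y/q) be the unique positive solution of z³/(z+1) = y/q, the Legendre transform of the ReLU cumulant generating function has the explicit expression κ*(y;q) = ((1 − z^{−2})/(2q)) · y − log((z + 1)/2). -/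
open MeasureTheory ProbabilityTheory
open scoped ENNReal

/-- `E[exp(η σ(√q N)²)] ∈ [0,∞]`, where `σ(x) = max{x,0}` is the ReLU function and `N` is
a standard Normal random variable. -/
noncomputable def reluMGF (η q : ℝ) : ℝ≥0∞ :=
  ∫⁻ x, ENNReal.ofReal (Real.exp (η * max (Real.sqrt q * x) 0 ^ 2))
    ∂(gaussianReal 0 1)

/-- `κ(η;q) := log E[exp(η σ(√q N)²)] ∈ (−∞,∞]` for the ReLU function `σ(x) = max{x,0}`. -/
noncomputable def reluKappa (η q : ℝ) : EReal :=
  (reluMGF η q).log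

/-- The Fenchel–Legendre transform `κ*(y;q) := sup_{η∈ℝ} {ηy − κ(η;q)}`,
with values in `EReal`. -/
noncomputable def reluKappaStar (y q : ℝ) : EReal :=
  ⨆ η : ℝ, ((η * y : ℝ) : EReal) - reluKappa η q

/-!
For `2ηq < 1` the moment generating function is a Gaussian integral over two half-lines and
equals `(1 + t)/2` with `t = (1 - 2ηq)^(-1/2)`; for `2ηq ≥ 1` it is infinite. In the coordinate
`t > 0`, `ηy - κ(η;q) = (1 - t⁻²) y/(2q) - log((t+1)/2)`, whose critical-point equation is
`t³/(t+1) = y/q`; so the supremum is attained at `t = z`.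
-/

open Real Set

lemma integral_gaussian_Iic {b : ℝ} (hb : 0 < b) :
    ∫ x in Iic (0 : ℝ), exp (-b * x ^ 2) = √(π / b) / 2 := by
  have h := integral_add_compl (measurableSet_Ioi (a := 0)) (integrable_exp_neg_mul_sq hb)
  rw [compl_Ioi, integral_gaussian_Ioi, integral_gaussian] at h
  linarith

lemma lintegral_Ioi_ofReal_exp_neg_mul_sq {b : ℝ} (hb : 0 < b) :
    ∫⁻ x in Ioi (0 : ℝ), ENNReal.ofReal (exp (-b * x ^ 2)) = ENNReal.ofReal (√(π / b) / 2) := by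
  rw [← integral_gaussian_Ioi, ofReal_integral_eq_lintegral_ofReal
    (integrable_exp_neg_mul_sq hb).integrableOn (ae_of_all _ fun x => (exp_pos _).le)]

lemma lintegral_Ioi_ofReal_exp_neg_mul_sq_of_nonpos {b : ℝ} (hb : b ≤ 0) :
    ∫⁻ x in Ioi (0 : ℝ), ENNReal.ofReal (exp (-b * x ^ 2)) = ∞ := by
  refine top_unique ?_
  calc ∞ = ∫⁻ _ in Ioi (0 : ℝ), 1 := by simp
    _ ≤ _ := setLIntegral_mono (by fun_prop) fun x _ =>
        ENNReal.one_le_ofReal.mpr (one_le_exp (by nlinarith [sq_nonneg x]))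

lemma gaussianPDFReal_zero_one (x : ℝ) :
    gaussianPDFReal 0 1 x = (√(2 * π))⁻¹ * exp (-(1 / 2) * x ^ 2) := by
  simp only [gaussianPDFReal, NNReal.coe_one, mul_one, sub_zero]
  ring_nf

/-- Only the positive half-line sees the ReLU; the negative one contributes `P(N ≤ 0) = 1/2`. -/
lemma reluMGF_eq (η : ℝ) {q : ℝ} (hq : 0 ≤ q) :
    reluMGF η q = ENNReal.ofReal (1 / 2) + ENNReal.ofReal (√(2 * π))⁻¹ *
      ∫⁻ x in Ioi (0 : ℝ), ENNReal.ofReal (exp (-(1 / 2 - η * q) * x ^ 2)) := by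
  have hσ (x : ℝ) : max (√q * x) 0 = √q * max x 0 := by
    rw [mul_max_of_nonneg _ _ (sqrt_nonneg q), mul_zero]
  rw [reluMGF, gaussianReal_of_var_ne_zero 0 one_ne_zero,
    lintegral_withDensity_eq_lintegral_mul _ (measurable_gaussianPDF 0 1) (by fun_prop),
    ← lintegral_add_compl _ measurableSet_Ioi, compl_Ioi, add_comm]
  congr 1
  · calc _ = ∫⁻ x in Iic (0 : ℝ), ENNReal.ofReal ((√(2 * π))⁻¹ * exp (-(1 / 2) * x ^ 2)) :=
          setLIntegral_congr_fun measurableSet_Iic fun x hx => by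
            simp [gaussianPDF, gaussianPDFReal_zero_one, hσ, max_eq_right (mem_Iic.mp hx)]
      _ = ENNReal.ofReal (∫ x in Iic (0 : ℝ), (√(2 * π))⁻¹ * exp (-(1 / 2) * x ^ 2)) :=
          (ofReal_integral_eq_lintegral_ofReal
            ((integrable_exp_neg_mul_sq one_half_pos).integrableOn.const_mul _)
            (ae_of_all _ fun x => by positivity)).symm
      _ = ENNReal.ofReal (1 / 2) := by
          rw [integral_const_mul, integral_gaussian_Iic one_half_pos, div_div_eq_mul_div,
            div_one, mul_comm π]
          field_simp
  · rw [← lintegral_const_mul _ (by fun_prop)]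
    refine setLIntegral_congr_fun measurableSet_Ioi fun x hx => ?_
    simp only [Pi.mul_apply, gaussianPDF, gaussianPDFReal_zero_one, hσ,
      max_eq_left (mem_Ioi.mp hx).le]
    rw [← ENNReal.ofReal_mul (by positivity), ← ENNReal.ofReal_mul (by positivity), mul_assoc,
      ← exp_add, mul_pow, sq_sqrt hq]
    ring_nf

lemma reluMGF_of_one_sub_eq {η q t : ℝ} (hq : 0 ≤ q) (ht : 0 < t)
    (h : 1 - 2 * η * q = (t ^ 2)⁻¹) : reluMGF η q = ENNReal.ofReal ((t + 1) / 2) := by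
  have hb : 1 / 2 - η * q = (t ^ 2)⁻¹ / 2 := by linarith
  rw [reluMGF_eq η hq, hb, lintegral_Ioi_ofReal_exp_neg_mul_sq (by positivity),
    ← ENNReal.ofReal_mul (by positivity), ← ENNReal.ofReal_add (by norm_num) (by positivity),
    show π / ((t ^ 2)⁻¹ / 2) = (2 * π) * t ^ 2 by field_simp,
    sqrt_mul (by positivity) (t ^ 2), sqrt_sq ht.le]
  congr 1
  field_simp
  ring

lemma reluMGF_of_one_le_mul {η q : ℝ} (hq : 0 ≤ q) (h : 1 ≤ 2 * η * q) : reluMGF η q = ∞ := by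
  rw [reluMGF_eq η hq, lintegral_Ioi_ofReal_exp_neg_mul_sq_of_nonpos (by linarith),
    ENNReal.mul_top (by simp [pi_pos]), add_top]

lemma reluKappa_of_one_sub_eq {η q t : ℝ} (hq : 0 ≤ q) (ht : 0 < t)
    (h : 1 - 2 * η * q = (t ^ 2)⁻¹) : reluKappa η q = (log ((t + 1) / 2) : ℝ) := by
  rw [reluKappa, reluMGF_of_one_sub_eq hq ht h, ENNReal.log_ofReal_of_pos (by positivity)]

lemma reluKappa_of_one_le_mul {η q : ℝ} (hq : 0 ≤ q) (h : 1 ≤ 2 * η * q) : reluKappa η q = ⊤ := by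
  rw [reluKappa, reluMGF_of_one_le_mul hq h, ENNReal.log_top]

/-- Through `log x ≤ x - 1`, the gap is bounded below by a manifestly nonnegative rational
function. -/
lemma one_sub_inv_sq_mul_sub_log_le {t z : ℝ} (ht : 0 < t) (hz : 0 < z) :
    (1 - (t ^ 2)⁻¹) / 2 * (z ^ 3 / (z + 1)) - log ((t + 1) / 2)
      ≤ (1 - (z ^ 2)⁻¹) / 2 * (z ^ 3 / (z + 1)) - log ((z + 1) / 2) := by
  have hlog : log ((z + 1) / 2) - log ((t + 1) / 2) ≤ (z - t) / (t + 1) := by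
    rw [← log_div (by positivity) (by positivity)]
    calc _ ≤ (z + 1) / 2 / ((t + 1) / 2) - 1 := log_le_sub_one_of_pos (by positivity)
      _ = _ := by field_simp; ring
  have hgap : (1 - (z ^ 2)⁻¹) / 2 * (z ^ 3 / (z + 1)) - (1 - (t ^ 2)⁻¹) / 2 * (z ^ 3 / (z + 1))
      - (z - t) / (t + 1) = (z - t) ^ 2 * ((z + 2) * t + z) / (2 * (z + 1) * t ^ 2 * (t + 1)) := by
    field_simp
    ring
  have : 0 ≤ (z - t) ^ 2 * ((z + 2) * t + z) / (2 * (z + 1) * t ^ 2 * (t + 1)) := by positivity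
  linarith

theorem reluKappaStar_explicit_general (q y z : ℝ) (hq : 0 < q) (hz : 0 < z)
    (hfz : z ^ 3 / (z + 1) = y / q) :
    reluKappaStar y q
      = (((1 - (z ^ 2)⁻¹) / (2 * q) * y - Real.log ((z + 1) / 2) : ℝ) : EReal) := by
  have hy : y = q * (z ^ 3 / (z + 1)) := by rw [hfz]; field_simp
  have hzy : (1 - (z ^ 2)⁻¹) / (2 * q) * y = (1 - (z ^ 2)⁻¹) / 2 * (z ^ 3 / (z + 1)) := by
    rw [hy]; field_simp
  refine le_antisymm (iSup_le fun η => ?_) ?_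
  · rcases lt_or_ge (2 * η * q) 1 with hη | hη
    · set t := (√(1 - 2 * η * q))⁻¹
      have ht : 0 < t := inv_pos.mpr (sqrt_pos.mpr (by linarith))
      have htη : 1 - 2 * η * q = (t ^ 2)⁻¹ := by
        rw [inv_pow, inv_inv, sq_sqrt (by linarith)]
      have hηy : η * y = (1 - (t ^ 2)⁻¹) / 2 * (z ^ 3 / (z + 1)) := by
        rw [← htη, hy]; ring
      rw [reluKappa_of_one_sub_eq hq.le ht htη, ← EReal.coe_sub, EReal.coe_le_coe_iff, hηy, hzy]
      exact one_sub_inv_sq_mul_sub_log_le ht hz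
    · simp [reluKappa_of_one_le_mul hq.le hη]
  · have hzη₀ : 1 - 2 * ((1 - (z ^ 2)⁻¹) / (2 * q)) * q = (z ^ 2)⁻¹ := by field_simp; ring
    rw [EReal.coe_sub, ← reluKappa_of_one_sub_eq hq.le hz hzη₀]
    exact le_iSup (fun η => ((η * y : ℝ) : EReal) - reluKappa η q) _

/-- For `q > 0` and `y > 0`, letting `z = f⁻¹(y/q)` be the unique
positive solution of `z³/(z+1) = y/q`, the Legendre transform of the ReLU cumulant
generating function is `κ*(y;q) = ((1 − z⁻²)/(2q)) y − log((z+1)/2)`. -/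
theorem reluKappaStar_explicit (q y z : ℝ) (hq : 0 < q) (hy : 0 < y) (hz : 0 < z)
    (hfz : z ^ 3 / (z + 1) = y / q) :
    reluKappaStar y q
      = (((1 - (z ^ 2)⁻¹) / (2 * q) * y - Real.log ((z + 1) / 2) : ℝ) : EReal) :=
  reluKappaStar_explicit_general q y z hq hz hfz
end
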